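/- Let G̃ be obtained by Construction 1 from (G, H, v_c), with adjacency matrix Ã, and write v_c^1 = (v_c,1), v_c^2 = (v_c,2). Then for every natural number k and all vertices v, w ∈ V(G) lying in the same orbit under Aut(G, v_c), the (v,1)-entry of Ã^k(e_{v_c^1} − e_{v_c^2}) equals its (w,1)-entry. -/
import Mathlib


open SimpleGraph Matrix

/-- `v` and `w` lie in the same orbit under the automorphisms of `G` fixing `vc`. -/
def SameOrbit {V : Type*} (G : SimpleGraph V) (vc v w : V) : Prop :=
  ∃ φ : G ≃g G, φ vc = vc ∧ φ v = w

/-- `Gt` is obtained from `(G, H, vc)` by Construction 1. -/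
def IsConstruction1 {V W : Type*} (G : SimpleGraph V) (H : SimpleGraph W)
    (vc : V) (Gt : SimpleGraph (V × Fin 2 ⊕ W)) : Prop :=
  (∀ i : Fin 2, ∀ v w : V, Gt.Adj (Sum.inl (v, i)) (Sum.inl (w, i)) ↔ G.Adj v w) ∧
  (∀ v w : V, ¬ Gt.Adj (Sum.inl (v, 0)) (Sum.inl (w, 1))) ∧
  (∀ v w : W, Gt.Adj (Sum.inr v) (Sum.inr w) ↔ H.Adj v w) ∧
  (∀ w : W, ∀ u : V,
    Nat.card {v : V // SameOrbit G vc u v ∧ Gt.Adj (Sum.inl (v, 0)) (Sum.inr w)} =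
    Nat.card {v : V // SameOrbit G vc u v ∧ Gt.Adj (Sum.inl (v, 1)) (Sum.inr w)})

section Aux

variable {V : Type*} {G : SimpleGraph V} {vc : V}

lemma sameOrbit_refl (G : SimpleGraph V) (vc v : V) : SameOrbit G vc v v :=
  ⟨RelIso.refl _, rfl, rfl⟩

lemma sameOrbit_symm {u v : V} (h : SameOrbit G vc u v) : SameOrbit G vc v u := by
  obtain ⟨φ, h1, h2⟩ := h
  exact ⟨φ.symm, φ.injective (by rw [RelIso.apply_symm_apply, h1]),
    φ.injective (by rw [RelIso.apply_symm_apply, h2])⟩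

lemma sameOrbit_trans {u v w : V} (h : SameOrbit G vc u v) (h' : SameOrbit G vc v w) :
    SameOrbit G vc u w := by
  obtain ⟨φ, h1, h2⟩ := h
  obtain ⟨ψ, h3, h4⟩ := h'
  exact ⟨φ.trans ψ, by simp [RelIso.trans_apply, h1, h3], by simp [RelIso.trans_apply, h2, h4]⟩

/-- Key counting lemma: if `g` is constant on orbits and two finsets meet every
orbit in the same number of elements, then the sums of `g` over them agree. -/
lemma sum_eq_of_card_filter_eq [Fintype V] (G : SimpleGraph V) (vc : V)
    [∀ t v : V, Decidable (SameOrbit G vc t v)] (g : V → ℝ) (hg : ∀ u v, SameOrbit G vc u v → g u = g v)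
    (S0 S1 : Finset V)
    (hcount : ∀ t : V, (S0.filter (fun v => SameOrbit G vc t v)).card =
      (S1.filter (fun v => SameOrbit G vc t v)).card) :
    ∑ v ∈ S0, g v = ∑ v ∈ S1, g v := by
  classical
  have horb : ∀ u t : V, SameOrbit G vc u t →
      (Finset.univ.filter (fun v => SameOrbit G vc u v)) =
      (Finset.univ.filter (fun v => SameOrbit G vc t v)) := by
    intro u t hut
    ext x
    simp only [Finset.mem_filter, Finset.mem_univ, true_and]
    exact ⟨fun h => sameOrbit_trans (sameOrbit_symm hut) h, fun h => sameOrbit_trans hut h⟩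
  have stepA : ∀ S : Finset V, ∑ v ∈ S, g v =
      ∑ t : V, (g t / ((Finset.univ.filter (fun v => SameOrbit G vc t v)).card : ℝ)) *
        ((S.filter (fun v => SameOrbit G vc t v)).card : ℝ) := by
    intro S
    have h1 : ∀ t : V,
        (g t / ((Finset.univ.filter (fun v => SameOrbit G vc t v)).card : ℝ)) *
          ((S.filter (fun v => SameOrbit G vc t v)).card : ℝ) =
        ∑ v ∈ S, if SameOrbit G vc t v then
          g t / ((Finset.univ.filter (fun x => SameOrbit G vc t x)).card : ℝ) else 0 := by
      intro t
      rw [← Finset.sum_filter, Finset.sum_const, nsmul_eq_mul, mul_comm]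
    rw [Finset.sum_congr rfl (fun t _ => h1 t), Finset.sum_comm]
    refine Finset.sum_congr rfl (fun v _ => ?_)
    rw [← Finset.sum_filter]
    have hf : Finset.univ.filter (fun t => SameOrbit G vc t v) =
        Finset.univ.filter (fun t => SameOrbit G vc v t) := by
      ext x
      simp only [Finset.mem_filter, Finset.mem_univ, true_and]
      exact ⟨sameOrbit_symm, sameOrbit_symm⟩
    rw [hf]
    have h2 : ∀ t ∈ Finset.univ.filter (fun t => SameOrbit G vc v t),
        g t / ((Finset.univ.filter (fun x => SameOrbit G vc t x)).card : ℝ) =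
        g v / ((Finset.univ.filter (fun x => SameOrbit G vc v x)).card : ℝ) := by
      intro t ht
      simp only [Finset.mem_filter, Finset.mem_univ, true_and] at ht
      rw [← hg v t ht, ← horb v t ht]
    rw [Finset.sum_congr rfl h2, Finset.sum_const, nsmul_eq_mul]
    have hpos : ((Finset.univ.filter (fun x => SameOrbit G vc v x)).card : ℝ) ≠ 0 := by
      have : v ∈ Finset.univ.filter (fun x => SameOrbit G vc v x) := by
        simp [sameOrbit_refl]
      have := Finset.card_pos.mpr ⟨v, this⟩
      positivity
    rw [mul_div_assoc']
    field_simp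
  rw [stepA S0, stepA S1]
  exact Finset.sum_congr rfl (fun t _ => by rw [hcount t])

end Aux

lemma construction1_key {V W : Type*} [Fintype V] [Fintype W]
    [DecidableEq V] [DecidableEq W]
    (G : SimpleGraph V) (H : SimpleGraph W) (vc : V)
    (Gt : SimpleGraph (V × Fin 2 ⊕ W)) [DecidableRel Gt.Adj]
    (hC : IsConstruction1 G H vc Gt) (k : ℕ) :
    (∀ u : V, ((Gt.adjMatrix ℝ ^ k) *ᵥ
        (Pi.single (Sum.inl (vc, 0)) 1 - Pi.single (Sum.inl (vc, 1)) 1)) (Sum.inl (u, 1)) =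
      - ((Gt.adjMatrix ℝ ^ k) *ᵥ
        (Pi.single (Sum.inl (vc, 0)) 1 - Pi.single (Sum.inl (vc, 1)) 1)) (Sum.inl (u, 0))) ∧
    (∀ w : W, ((Gt.adjMatrix ℝ ^ k) *ᵥ
        (Pi.single (Sum.inl (vc, 0)) 1 - Pi.single (Sum.inl (vc, 1)) 1)) (Sum.inr w) = 0) ∧
    (∀ u t : V, SameOrbit G vc u t → ((Gt.adjMatrix ℝ ^ k) *ᵥ
        (Pi.single (Sum.inl (vc, 0)) 1 - Pi.single (Sum.inl (vc, 1)) 1)) (Sum.inl (u, 0)) =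
      ((Gt.adjMatrix ℝ ^ k) *ᵥ
        (Pi.single (Sum.inl (vc, 0)) 1 - Pi.single (Sum.inl (vc, 1)) 1)) (Sum.inl (t, 0))) := by
  classical
  set d : (V × Fin 2 ⊕ W) → ℝ :=
    Pi.single (Sum.inl (vc, 0)) 1 - Pi.single (Sum.inl (vc, 1)) 1 with hd
  induction k with
  | zero =>
    simp only [pow_zero, Matrix.one_mulVec]
    refine ⟨fun u => ?_, fun w => ?_, fun u t hut => ?_⟩
    · by_cases h : u = vc <;>
        simp [hd, Pi.single_apply, h, Prod.ext_iff, Fin.ext_iff]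
    · simp [hd, Pi.single_apply]
    · obtain ⟨φ, h1, h2⟩ := hut
      have : u = vc ↔ t = vc := by
        constructor
        · rintro rfl; rw [← h2, h1]
        · rintro rfl; rw [← h1] at h2; exact φ.injective h2
      by_cases h : u = vc
      · simp [hd, Pi.single_apply, h, this.mp h]
      · have ht : t ≠ vc := fun ht => h (this.mpr ht)
        simp [hd, Pi.single_apply, h, ht, Prod.ext_iff]
  | succ k ih =>
    obtain ⟨ih1, ih2, ih3⟩ := ih
    set x : (V × Fin 2 ⊕ W) → ℝ := (Gt.adjMatrix ℝ ^ k) *ᵥ d with hx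
    have hstep : (Gt.adjMatrix ℝ ^ (k + 1)) *ᵥ d = Gt.adjMatrix ℝ *ᵥ x := by
      rw [hx, Matrix.mulVec_mulVec, ← pow_succ']
    have hexpand : ∀ a : V × Fin 2 ⊕ W, ((Gt.adjMatrix ℝ ^ (k + 1)) *ᵥ d) a =
        (∑ v : V, if Gt.Adj a (Sum.inl (v, 0)) then x (Sum.inl (v, 0)) else 0) +
        (∑ v : V, if Gt.Adj a (Sum.inl (v, 1)) then x (Sum.inl (v, 1)) else 0) +
        (∑ w : W, if Gt.Adj a (Sum.inr w) then x (Sum.inr w) else 0) := by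
      intro a
      rw [hstep, adjMatrix_mulVec_apply, neighborFinset_eq_filter, Finset.sum_filter]
      rw [Fintype.sum_sum_type, Fintype.sum_prod_type]
      congr 1
      rw [← Finset.sum_add_distrib]
      refine Finset.sum_congr rfl (fun v _ => ?_)
      rw [Fin.sum_univ_two]
    have expand0 : ∀ u : V, ((Gt.adjMatrix ℝ ^ (k + 1)) *ᵥ d) (Sum.inl (u, 0)) =
        ∑ v : V, if G.Adj u v then x (Sum.inl (v, 0)) else 0 := by
      intro u
      rw [hexpand]
      have e1 : (∑ v : V, if Gt.Adj (Sum.inl (u, 0)) (Sum.inl (v, 1))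
          then x (Sum.inl (v, 1)) else 0) = 0 :=
        Finset.sum_eq_zero fun v _ => by simp [hC.2.1 u v]
      have e2 : (∑ w : W, if Gt.Adj (Sum.inl (u, 0)) (Sum.inr w)
          then x (Sum.inr w) else 0) = 0 :=
        Finset.sum_eq_zero fun w _ => by simp [ih2 w]
      rw [e1, e2, add_zero, add_zero]
      exact Finset.sum_congr rfl fun v _ => if_congr (hC.1 0 u v) rfl rfl
    have expand1 : ∀ u : V, ((Gt.adjMatrix ℝ ^ (k + 1)) *ᵥ d) (Sum.inl (u, 1)) =
        ∑ v : V, if G.Adj u v then x (Sum.inl (v, 1)) else 0 := by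
      intro u
      rw [hexpand]
      have e1 : (∑ v : V, if Gt.Adj (Sum.inl (u, 1)) (Sum.inl (v, 0))
          then x (Sum.inl (v, 0)) else 0) = 0 :=
        Finset.sum_eq_zero fun v _ => by
          have : ¬ Gt.Adj (Sum.inl (u, 1)) (Sum.inl (v, 0)) := fun h =>
            hC.2.1 v u h.symm
          simp [this]
      have e2 : (∑ w : W, if Gt.Adj (Sum.inl (u, 1)) (Sum.inr w)
          then x (Sum.inr w) else 0) = 0 :=
        Finset.sum_eq_zero fun w _ => by simp [ih2 w]
      rw [e1, e2, zero_add, add_zero]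
      exact Finset.sum_congr rfl fun v _ => if_congr (hC.1 1 u v) rfl rfl
    refine ⟨fun u => ?_, fun w => ?_, fun u t hut => ?_⟩
    · rw [expand0, expand1, ← Finset.sum_neg_distrib]
      refine Finset.sum_congr rfl fun v _ => ?_
      rw [ih1 v]
      split <;> simp
    · rw [hexpand]
      have e2 : (∑ w' : W, if Gt.Adj (Sum.inr w) (Sum.inr w')
          then x (Sum.inr w') else 0) = 0 :=
        Finset.sum_eq_zero fun w' _ => by simp [ih2 w']
      rw [e2, add_zero]
      have e1 : (∑ v : V, if Gt.Adj (Sum.inr w) (Sum.inl (v, 1))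
          then x (Sum.inl (v, 1)) else 0) =
          - ∑ v : V, if Gt.Adj (Sum.inr w) (Sum.inl (v, 1))
          then x (Sum.inl (v, 0)) else 0 := by
        rw [← Finset.sum_neg_distrib]
        refine Finset.sum_congr rfl fun v _ => ?_
        rw [ih1 v]
        split <;> simp
      rw [e1]
      rw [add_neg_eq_zero]
      -- now apply the counting lemma
      have key := sum_eq_of_card_filter_eq G vc (fun v => x (Sum.inl (v, 0)))
        (fun u v h => ih3 u v h)
        (Finset.univ.filter (fun v => Gt.Adj (Sum.inl (v, 0)) (Sum.inr w)))
        (Finset.univ.filter (fun v => Gt.Adj (Sum.inl (v, 1)) (Sum.inr w)))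
        ?_
      · rw [Finset.sum_filter, Finset.sum_filter] at key
        refine Eq.trans ?_ (key.trans ?_) <;>
          exact Finset.sum_congr rfl fun v _ => if_congr (Gt.adj_comm _ _) rfl rfl
      · intro t
        have conv : ∀ (P : V → Prop) [DecidablePred P],
            (Finset.univ.filter P).card = Nat.card {v : V // P v} := by
          intro P _
          rw [Nat.card_eq_fintype_card, Fintype.card_subtype]
        rw [Finset.filter_filter, Finset.filter_filter, conv, conv]
        calc Nat.card {v : V // Gt.Adj (Sum.inl (v, 0)) (Sum.inr w) ∧ SameOrbit G vc t v}
            = Nat.card {v : V // SameOrbit G vc t v ∧ Gt.Adj (Sum.inl (v, 0)) (Sum.inr w)} :=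
              Nat.card_congr (Equiv.subtypeEquivRight fun v => and_comm)
          _ = Nat.card {v : V // SameOrbit G vc t v ∧ Gt.Adj (Sum.inl (v, 1)) (Sum.inr w)} :=
              hC.2.2.2 w t
          _ = Nat.card {v : V // Gt.Adj (Sum.inl (v, 1)) (Sum.inr w) ∧ SameOrbit G vc t v} :=
              Nat.card_congr (Equiv.subtypeEquivRight fun v => and_comm)
    · obtain ⟨φ, hφc, hφu⟩ := hut
      rw [expand0, expand0]
      rw [← Equiv.sum_comp (φ.toEquiv)
        (fun v => if G.Adj t v then x (Sum.inl (v, 0)) else 0)]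
      refine Finset.sum_congr rfl fun v _ => ?_
      show _ = (if G.Adj t (φ v) then x (Sum.inl (φ v, 0)) else 0)
      have hadj : G.Adj t (φ v) ↔ G.Adj u v := by
        rw [← hφu]; exact φ.map_adj_iff
      have hval : x (Sum.inl (φ v, 0)) = x (Sum.inl (v, 0)) :=
        (ih3 v (φ v) ⟨φ, hφc, rfl⟩).symm
      rw [if_congr hadj hval rfl]

theorem construction1_constant_on_orbits {V W : Type*} [Fintype V] [Fintype W]
    [DecidableEq V] [DecidableEq W]
    (G : SimpleGraph V) (H : SimpleGraph W) (vc : V)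
    (Gt : SimpleGraph (V × Fin 2 ⊕ W)) [DecidableRel Gt.Adj]
    (hC : IsConstruction1 G H vc Gt) (k : ℕ) (v w : V) (hvw : SameOrbit G vc v w) :
    ((Gt.adjMatrix ℝ ^ k) *ᵥ
        (Pi.single (Sum.inl (vc, 0)) 1 - Pi.single (Sum.inl (vc, 1)) 1)) (Sum.inl (v, 0)) =
      ((Gt.adjMatrix ℝ ^ k) *ᵥ
        (Pi.single (Sum.inl (vc, 0)) 1 - Pi.single (Sum.inl (vc, 1)) 1)) (Sum.inl (w, 0)) := by
  exact (construction1_key G H vc Gt hC k).2.2 v w hvw
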